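/- Let k ≥ 1 and n ≥ 1 be integers. Then the Harer–Zagier three-term recurrence (k+2)·Q_{k+1}(n) = 2n(2k+1)·Q_k(n) + k(2k+1)(2k-1)·Q_{k-1}(n) holds, where Q_k(n) is given by its Witte–Forrester hypergeometric representation. -/
import Mathlib


/-- The rising Pochhammer symbol `(a)_i = a (a+1) ⋯ (a+i-1)`. -/
noncomputable def poch (a : ℝ) (i : ℕ) : ℝ := ∏ j ∈ Finset.range i, (a + j)

/-- The double factorial `(2k-1)!! = ∏_{j=1}^{k} (2j-1)`. -/
noncomputable def doubleFact (k : ℕ) : ℝ := ∏ j ∈ Finset.range k, (2 * (j : ℝ) + 1)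

/-- The 2k-th moment of the n×n GUE normalised one-point function
(Witte–Forrester hypergeometric representation). -/
noncomputable def QGUE (k n : ℕ) : ℝ :=
  doubleFact k *
    ∑ i ∈ Finset.range (k + 1),
      poch (-(k : ℝ)) i * poch (1 - (n : ℝ)) i * 2 ^ i / (poch 2 i * (Nat.factorial i))

noncomputable def Tterm (n K i : ℕ) : ℝ :=
  poch (-(K : ℝ)) i * poch (1 - (n : ℝ)) i * 2 ^ i / (poch 2 i * (Nat.factorial i))

noncomputable def Gfun (n k i : ℕ) : ℝ :=
  -((i : ℝ) * (i + 1)) / ((k : ℝ) + 1) *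
    (poch (-((k : ℝ) + 1)) i * poch (1 - (n : ℝ)) i * 2 ^ i / (poch 2 i * (Nat.factorial i)))

lemma poch_succ (a : ℝ) (i : ℕ) : poch a (i + 1) = poch a i * (a + i) :=
  Finset.prod_range_succ _ _

lemma poch_succ' (a : ℝ) (i : ℕ) : poch a (i + 1) = a * poch (a + 1) i := by
  unfold poch
  rw [Finset.prod_range_succ', mul_comm]
  congr 1
  · norm_num
  · apply Finset.prod_congr rfl
    intro j _
    push_cast
    ring

lemma poch_shift (a : ℝ) (i : ℕ) : poch a i * (a + i) = a * poch (a + 1) i := by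
  rw [← poch_succ, poch_succ']

lemma poch_two_pos (i : ℕ) : 0 < poch 2 i := by
  unfold poch
  apply Finset.prod_pos
  intro j _
  positivity

lemma poch_nat_eq_zero {k i : ℕ} (h : k < i) : poch (-(k : ℝ)) i = 0 := by
  unfold poch
  apply Finset.prod_eq_zero (Finset.mem_range.mpr h)
  simp

lemma key (n k i : ℕ) (hk : 1 ≤ k) :
    ((k : ℝ) + 2) * Tterm n (k + 1) i - 2 * (n : ℝ) * Tterm n k i
      - (k : ℝ) * Tterm n (k - 1) i = Gfun n k (i + 1) - Gfun n k i := by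
  have hkR : (1 : ℝ) ≤ (k : ℝ) := by exact_mod_cast hk
  have hk0 : (k : ℝ) ≠ 0 := by linarith
  have hk1 : (k : ℝ) + 1 ≠ 0 := by positivity
  set A := poch (-((k : ℝ) + 1)) i with hA
  set B := poch (-(k : ℝ)) i with hBdef
  set C := poch (-((k : ℝ) - 1)) i with hCdef
  set U := poch (1 - (n : ℝ)) i with hU
  have hP : (0 : ℝ) < poch 2 i := poch_two_pos i
  have hF : (0 : ℝ) < (Nat.factorial i : ℝ) := by
    exact_mod_cast Nat.factorial_pos i
  -- contiguous relations
  have hB : A * (-((k : ℝ) + 1) + i) = -((k : ℝ) + 1) * B := by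
    rw [hA, hBdef, poch_shift, show -((k : ℝ) + 1) + 1 = -(k : ℝ) by ring]
  have hC : B * (-(k : ℝ) + i) = -(k : ℝ) * C := by
    rw [hBdef, hCdef, poch_shift, show -(k : ℝ) + 1 = -((k : ℝ) - 1) by ring]
  have hBval : B = A * ((k : ℝ) + 1 - i) / ((k : ℝ) + 1) := by
    field_simp
    linarith [hB]
  have hCval : C = A * ((k : ℝ) + 1 - i) * ((k : ℝ) - i) / (((k : ℝ) + 1) * k) := by
    have : C = B * ((k : ℝ) - i) / k := by
      field_simp
      linarith [hC]
    rw [this, hBval]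
    field_simp
  -- cast simplifications
  have hcast1 : ((k + 1 : ℕ) : ℝ) = (k : ℝ) + 1 := by push_cast; ring
  have hcast2 : ((k - 1 : ℕ) : ℝ) = (k : ℝ) - 1 := by
    have := Nat.cast_sub hk (R := ℝ)
    simpa using this
  unfold Tterm Gfun
  rw [hcast1, hcast2, ← hA, ← hBdef, ← hCdef, ← hU]
  rw [poch_succ (-((k : ℝ) + 1)) i, poch_succ (1 - (n : ℝ)) i, poch_succ 2 i,
    Nat.factorial_succ]
  rw [hBval, hCval, ← hA, ← hU]
  push_cast
  field_simp
  ring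

/-- The Harer–Zagier three-term recurrence for the GUE moments. -/
theorem harer_zagier_recurrence (k n : ℕ) (hk : 1 ≤ k) (hn : 1 ≤ n) :
    ((k : ℝ) + 2) * QGUE (k + 1) n =
      2 * (n : ℝ) * (2 * (k : ℝ) + 1) * QGUE k n +
        (k : ℝ) * (2 * (k : ℝ) + 1) * (2 * (k : ℝ) - 1) * QGUE (k - 1) n := by
  obtain ⟨m, rfl⟩ : ∃ m, k = m + 1 := ⟨k - 1, (Nat.succ_pred_eq_of_pos hk).symm⟩
  set k := m + 1 with hkdef
  -- sums over the common range k+2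
  have hQ : ∀ K : ℕ, QGUE K n = doubleFact K * ∑ i ∈ Finset.range (K + 1), Tterm n K i := by
    intro K; rfl
  -- telescoping sum
  have htel : ∑ i ∈ Finset.range (k + 2),
      (((k : ℝ) + 2) * Tterm n (k + 1) i - 2 * (n : ℝ) * Tterm n k i
        - (k : ℝ) * Tterm n (k - 1) i) = 0 := by
    rw [Finset.sum_congr rfl fun i _ => key n k i hk, Finset.sum_range_sub (Gfun n k)]
    have h1 : Gfun n k (k + 2) = 0 := by
      unfold Gfun
      have : poch (-((k : ℝ) + 1)) (k + 2) = 0 := by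
        have := poch_nat_eq_zero (k := k + 1) (i := k + 2) (by omega)
        rwa [show ((k + 1 : ℕ) : ℝ) = (k : ℝ) + 1 by push_cast; ring] at this
      rw [this]; simp
    have h2 : Gfun n k 0 = 0 := by
      unfold Gfun; simp
    rw [h1, h2]; ring
  -- zero tail terms
  have hz1 : Tterm n k (k + 1) = 0 := by
    unfold Tterm
    rw [poch_nat_eq_zero (by omega : k < k + 1)]
    simp
  have hz2 : Tterm n (k - 1) k = 0 := by
    unfold Tterm
    rw [poch_nat_eq_zero (by omega : k - 1 < k)]
    simp
  have hz3 : Tterm n (k - 1) (k + 1) = 0 := by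
    unfold Tterm
    rw [poch_nat_eq_zero (by omega : k - 1 < k + 1)]
    simp
  -- extended sums
  have hs1 : ∑ i ∈ Finset.range (k + 1), Tterm n k i
      = ∑ i ∈ Finset.range (k + 2), Tterm n k i := by
    rw [Finset.sum_range_succ _ (k + 1), hz1, add_zero]
  have hs2 : ∑ i ∈ Finset.range (k - 1 + 1), Tterm n (k - 1) i
      = ∑ i ∈ Finset.range (k + 2), Tterm n (k - 1) i := by
    have hkm : k - 1 + 1 = k := by omega
    rw [hkm, Finset.sum_range_succ _ (k + 1), Finset.sum_range_succ _ k, hz2, hz3]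
    ring
  -- double factorial relations
  have hd1 : doubleFact (k + 1) = doubleFact k * (2 * (k : ℝ) + 1) :=
    Finset.prod_range_succ _ _
  have hd2 : doubleFact k = doubleFact (k - 1) * (2 * (k : ℝ) - 1) := by
    have : doubleFact (m + 1) = doubleFact m * (2 * (m : ℝ) + 1) :=
      Finset.prod_range_succ _ _
    rw [hkdef] at *
    simpa [Nat.add_sub_cancel] using by
      rw [this]; push_cast; ring
  -- distribute the telescoping identity
  have hsum : ((k : ℝ) + 2) * ∑ i ∈ Finset.range (k + 2), Tterm n (k + 1) i
      = 2 * (n : ℝ) * ∑ i ∈ Finset.range (k + 2), Tterm n k i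
        + (k : ℝ) * ∑ i ∈ Finset.range (k + 2), Tterm n (k - 1) i := by
    have := htel
    rw [Finset.sum_sub_distrib, Finset.sum_sub_distrib, ← Finset.mul_sum, ← Finset.mul_sum,
      ← Finset.mul_sum] at this
    linarith
  rw [hQ (k + 1), hQ k, hQ (k - 1), hs1, hs2, hd1, hd2]
  linear_combination (doubleFact (k - 1) * (2 * (k : ℝ) - 1) * (2 * (k : ℝ) + 1)) * hsum
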